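/- For all real α, β > −1 and all integers k, n ≥ 0, one has ∫_0^{π/2} (1 + cos(2θ))^k · P_n^{(α,β)}(cos(2θ)) dν^{(α,β)}(θ) = binom(k,n) · 2^k (α+1)_n (β+1)_k / (α+β+2)_{n+k}, where binom(k,n) = 0 if n > k. -/

import Mathlib

/-!
Substituting `x = sin² θ` turns `ν^{(α,β)}` into the beta distribution with parameters
`(α + 1, β + 1)`, and `cos 2θ = 1 - 2x`. In the explicit expansion of `P_n^{(α,β)}(1 - 2x)` the
`j`-th term is a multiple of `x^j (1 - x)^(n - j)`, so the integral is a combination of the beta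
moments `(α+1)_j (β+1)_{n-j+k} / (α+β+2)_{n+k}`. After the Pochhammer factors cancel, what remains
is the `n`-th forward difference `∑ⱼ (-1)^j C(n,j) (β+1+n-j)_k` of the degree-`k` polynomial
`y ↦ (y)_k`, namely `k (k-1) ⋯ (k-n+1) (β+n+1)_{k-n}`, which vanishes when `n > k`.
-/

open MeasureTheory Finset Real

/-- The Pochhammer symbol `(x)_n = x (x+1) ⋯ (x+n-1)`. -/
noncomputable def poch (x : ℝ) (n : ℕ) : ℝ := (ascPochhammer ℝ n).eval x

/-- The Jacobi polynomial `P_n^{(α,β)}`, via its standard explicit expansion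
(equivalent to Rodrigues' formula). -/
noncomputable def jacobiP (α β : ℝ) (n : ℕ) (t : ℝ) : ℝ :=
  ∑ k ∈ Finset.range (n + 1),
    poch (α + k + 1) (n - k) / ((n - k).factorial : ℝ) *
      (poch (β + (n - k) + 1) k / (k.factorial : ℝ)) *
      ((t - 1) / 2) ^ k * ((t + 1) / 2) ^ (n - k)

/-- The probability measure `ν^{(α,β)}` on `[0, π/2]` with density
`γ_{α,β}⁻¹ sin(θ)^{2α+1} cos(θ)^{2β+1}`, where
`γ_{α,β} = Γ(α+1)Γ(β+1)/(2Γ(α+β+2))`. -/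
noncomputable def nuMeasure (α β : ℝ) : Measure ℝ :=
  (volume.restrict (Set.Ioo 0 (π / 2))).withDensity fun θ =>
    ENNReal.ofReal (2 * Real.Gamma (α + β + 2) / (Real.Gamma (α + 1) * Real.Gamma (β + 1)) *
      Real.sin θ ^ (2 * α + 1) * Real.cos θ ^ (2 * β + 1))

open Set ProbabilityTheory fwdDiff

lemma poch_zero (x : ℝ) : poch x 0 = 1 := by simp [poch]

lemma poch_succ (x : ℝ) (m : ℕ) : poch x (m + 1) = poch x m * (x + m) :=
  ascPochhammer_succ_eval m x

lemma poch_succ' (x : ℝ) (m : ℕ) : poch x (m + 1) = x * poch (x + 1) m := by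
  simp [poch, ascPochhammer_succ_left, Polynomial.eval_comp]

lemma poch_add (x : ℝ) (m l : ℕ) : poch x (m + l) = poch x m * poch (x + m) l := by
  simp [poch, ← ascPochhammer_mul, Polynomial.eval_comp]

lemma poch_pos {x : ℝ} (hx : 0 < x) (m : ℕ) : 0 < poch x m := ascPochhammer_pos m x hx

lemma Gamma_add_natCast {x : ℝ} (hx : 0 < x) (m : ℕ) :
    Gamma (x + m) = poch x m * Gamma x := by
  induction m with
  | zero => simp [poch_zero]
  | succ m ih =>
    rw [Nat.cast_succ, ← add_assoc, Gamma_add_one (by positivity), ih, poch_succ]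
    ring

lemma fwdDiff_poch (k : ℕ) :
    Δ_[1] (fun x : ℝ => poch x k) = fun x => k * poch (x + 1) (k - 1) := by
  funext x
  cases k with
  | zero => simp [fwdDiff, poch_zero]
  | succ k =>
    rw [fwdDiff, poch_succ, poch_succ', Nat.add_sub_cancel]
    push_cast
    ring

lemma fwdDiff_iter_poch (k n : ℕ) :
    (Δ_[1])^[n] (fun x : ℝ => poch x k) = fun x => k.descFactorial n * poch (x + n) (k - n) := by
  induction n with
  | zero => simp
  | succ n ih =>
    rw [Function.iterate_succ_apply', ih]
    funext x
    have := congrFun (fwdDiff_poch (k - n)) (x + n)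
    simp only [fwdDiff] at this ⊢
    rw [← mul_sub, show x + 1 + n = x + n + 1 by ring, this, Nat.descFactorial_succ,
      Nat.sub_sub]
    push_cast
    rw [← add_assoc]
    ring

lemma sum_alternating_choose_mul_poch (y : ℝ) (k n : ℕ) :
    ∑ j ∈ range (n + 1), (-1 : ℝ) ^ j * n.choose j * poch (y + (n - j)) k
      = k.descFactorial n * poch (y + n) (k - n) := by
  have h := fwdDiff_iter_eq_sum_shift (1 : ℝ) (fun x => poch x k) n y
  rw [fwdDiff_iter_poch] at h
  beta_reduce at h
  rw [h, ← sum_range_reflect]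
  refine sum_congr rfl fun j hj => ?_
  have hj : j ≤ n := Nat.lt_succ_iff.mp (mem_range.mp hj)
  rw [Nat.add_sub_cancel, Nat.choose_symm hj, Nat.cast_sub hj]
  simp

lemma poch_mul_descFactorial (y : ℝ) (k n : ℕ) :
    poch y n * (k.descFactorial n * poch (y + n) (k - n))
      = n.factorial * k.choose n * poch y k := by
  rcases lt_or_ge k n with hkn | hnk
  · simp [Nat.choose_eq_zero_of_lt hkn, Nat.descFactorial_eq_zero_iff_lt.mpr hkn]
  · rw [Nat.descFactorial_eq_factorial_mul_choose, ← Nat.add_sub_cancel' hnk, poch_add,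
      Nat.add_sub_cancel_left]
    push_cast
    ring

lemma betaIntegrand_eq_ofReal {a b x : ℝ} (hx : x ∈ Ioo (0 : ℝ) 1) :
    (x : ℂ) ^ (((a + 1 : ℝ) : ℂ) - 1) * (1 - (x : ℂ)) ^ (((b + 1 : ℝ) : ℂ) - 1)
      = ((x ^ a * (1 - x) ^ b : ℝ) : ℂ) := by
  rw [Complex.ofReal_mul, Complex.ofReal_cpow hx.1.le, Complex.ofReal_cpow (by linarith [hx.2])]
  push_cast
  ring_nf

lemma betaIntegral_convergent_ofReal {a b : ℝ} (ha : -1 < a) (hb : -1 < b) :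
    IntegrableOn (fun x : ℝ => (x : ℂ) ^ (((a + 1 : ℝ) : ℂ) - 1) *
      (1 - (x : ℂ)) ^ (((b + 1 : ℝ) : ℂ) - 1)) (Ioo 0 1) :=
  (intervalIntegrable_iff_integrableOn_Ioo_of_le zero_le_one).mp <|
    Complex.betaIntegral_convergent (by simp; linarith) (by simp; linarith)

lemma integrableOn_rpow_mul_one_sub_rpow {a b : ℝ} (ha : -1 < a) (hb : -1 < b) :
    IntegrableOn (fun x : ℝ => x ^ a * (1 - x) ^ b) (Ioo 0 1) :=
  IntegrableOn.congr_fun (betaIntegral_convergent_ofReal ha hb).re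
    (fun x hx => by simp only [betaIntegrand_eq_ofReal hx, RCLike.re_to_complex,
      Complex.ofReal_re]) measurableSet_Ioo

lemma integral_rpow_mul_one_sub_rpow {a b : ℝ} (ha : -1 < a) (hb : -1 < b) :
    ∫ x in Ioo (0 : ℝ) 1, x ^ a * (1 - x) ^ b = beta (a + 1) (b + 1) := by
  rw [beta_eq_betaIntegralReal _ _ (by linarith) (by linarith), Complex.betaIntegral,
    intervalIntegral.integral_of_le zero_le_one, integral_Ioc_eq_integral_Ioo,
    setIntegral_congr_fun measurableSet_Ioo fun x hx => betaIntegrand_eq_ofReal hx,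
    integral_complex_ofReal, Complex.ofReal_re]

lemma betaWeight_mul_pow_mul_pow {α β x : ℝ} (hx : x ∈ Ioo (0 : ℝ) 1) (i m : ℕ) :
    x ^ α * (1 - x) ^ β * (x ^ i * (1 - x) ^ m) = x ^ (α + i) * (1 - x) ^ (β + m) := by
  rw [rpow_add_natCast hx.1.ne', rpow_add_natCast (sub_pos.mpr hx.2).ne']
  ring

lemma integrableOn_betaWeight_mul_pow_mul_pow {α β : ℝ} (hα : -1 < α) (hβ : -1 < β) (i m : ℕ) :
    IntegrableOn (fun x : ℝ => x ^ α * (1 - x) ^ β * (x ^ i * (1 - x) ^ m)) (Ioo 0 1) :=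
  (integrableOn_rpow_mul_one_sub_rpow (a := α + i) (b := β + m)
    (lt_add_of_lt_of_nonneg hα i.cast_nonneg) (lt_add_of_lt_of_nonneg hβ m.cast_nonneg)).congr_fun
    (fun _ hx => (betaWeight_mul_pow_mul_pow hx i m).symm) measurableSet_Ioo

lemma integral_betaWeight_mul_pow_mul_pow {α β : ℝ} (hα : -1 < α) (hβ : -1 < β) (i m : ℕ) :
    ∫ x in Ioo (0 : ℝ) 1, x ^ α * (1 - x) ^ β * (x ^ i * (1 - x) ^ m)
      = beta (α + 1) (β + 1) * (poch (α + 1) i * poch (β + 1) m / poch (α + β + 2) (i + m)) := by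
  rw [setIntegral_congr_fun measurableSet_Ioo fun x hx => betaWeight_mul_pow_mul_pow hx i m,
    integral_rpow_mul_one_sub_rpow (lt_add_of_lt_of_nonneg hα i.cast_nonneg)
      (lt_add_of_lt_of_nonneg hβ m.cast_nonneg)]
  have hα' : 0 < α + 1 := by linarith
  have hβ' : 0 < β + 1 := by linarith
  have hαβ : 0 < α + β + 2 := by linarith
  simp only [beta]
  rw [show α + i + 1 = α + 1 + i by ring, show β + m + 1 = β + 1 + m by ring,
    show α + 1 + i + (β + 1 + m) = α + β + 2 + ((i + m : ℕ) : ℝ) by push_cast; ring,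
    show α + 1 + (β + 1) = α + β + 2 by ring,
    Gamma_add_natCast hα', Gamma_add_natCast hβ', Gamma_add_natCast hαβ]
  have := (poch_pos hαβ (i + m)).ne'
  have := (Gamma_pos_of_pos hαβ).ne'
  field_simp

lemma sin_rpow_mul_cos_rpow {θ : ℝ} (hs : 0 < sin θ) (hc : 0 < cos θ) (a b : ℝ) :
    sin θ ^ (2 * a + 1) * cos θ ^ (2 * b + 1)
      = (sin θ ^ 2) ^ a * (1 - sin θ ^ 2) ^ b * (sin θ * cos θ) := by
  have hsq : ∀ {y : ℝ}, 0 < y → ∀ z : ℝ, y ^ (2 * z + 1) = (y ^ 2) ^ z * y := fun hy z => by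
    rw [rpow_add_one hy.ne', ← rpow_natCast_mul hy.le]
    norm_num
  rw [← cos_sq', hsq hs, hsq hc]
  ring

lemma strictMonoOn_sin_sq : StrictMonoOn (fun θ => sin θ ^ 2) (Icc 0 (π / 2)) := by
  intro a ha b hb hab
  have hsub : Icc 0 (π / 2) ⊆ Icc (-(π / 2)) (π / 2) := Icc_subset_Icc_left (by linarith [pi_pos])
  exact pow_lt_pow_left₀ (strictMonoOn_sin (hsub ha) (hsub hb) hab)
    (sin_nonneg_of_nonneg_of_le_pi ha.1 (by linarith [ha.2, pi_pos])) two_ne_zero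

lemma sin_sq_image_Ioo : (fun θ => sin θ ^ 2) '' Ioo 0 (π / 2) = Set.Ioo 0 1 := by
  rw [ContinuousOn.image_Ioo_of_strictMonoOn (by linarith [pi_pos]) (by fun_prop)
    strictMonoOn_sin_sq]
  simp

lemma integral_nuMeasure_comp_cos_two_mul {α β : ℝ} (hα : -1 < α) (hβ : -1 < β) (F : ℝ → ℝ) :
    ∫ θ, F (cos (2 * θ)) ∂nuMeasure α β
      = (beta (α + 1) (β + 1))⁻¹ * ∫ x in Ioo (0 : ℝ) 1, x ^ α * (1 - x) ^ β * F (1 - 2 * x) := by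
  have hB : 0 < beta (α + 1) (β + 1) := beta_pos (by linarith) (by linarith)
  have hconst : 2 * Gamma (α + β + 2) / (Gamma (α + 1) * Gamma (β + 1))
      = 2 * (beta (α + 1) (β + 1))⁻¹ := by
    rw [beta, inv_div, show α + 1 + (β + 1) = α + β + 2 by ring, mul_div_assoc]
  have hderiv : ∀ θ ∈ Ioo 0 (π / 2),
      HasDerivWithinAt (fun θ => sin θ ^ 2) (2 * sin θ * cos θ) (Ioo 0 (π / 2)) θ :=
    fun θ _ => by simpa using ((hasDerivAt_sin θ).fun_pow 2).hasDerivWithinAt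
  have hsubst := integral_image_eq_integral_abs_deriv_smul measurableSet_Ioo hderiv
    (strictMonoOn_sin_sq.mono Ioo_subset_Icc_self).injOn
    (fun x => x ^ α * (1 - x) ^ β * F (1 - 2 * x))
  rw [sin_sq_image_Ioo] at hsubst
  rw [nuMeasure, integral_withDensity_eq_integral_toReal_smul (by fun_prop)
    (ae_of_all _ fun _ => ENNReal.ofReal_lt_top), hsubst, ← integral_const_mul]
  refine setIntegral_congr_fun measurableSet_Ioo fun θ hθ => ?_
  have hs : 0 < sin θ := sin_pos_of_pos_of_lt_pi hθ.1 (by linarith [hθ.2, pi_pos])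
  have hc : 0 < cos θ := cos_pos_of_mem_Ioo ⟨by linarith [hθ.1, pi_pos], hθ.2⟩
  have hdens : 0 ≤ 2 * (beta (α + 1) (β + 1))⁻¹ * sin θ ^ (2 * α + 1) * cos θ ^ (2 * β + 1) := by
    have := rpow_pos_of_pos hs (2 * α + 1)
    have := rpow_pos_of_pos hc (2 * β + 1)
    positivity
  rw [hconst, ENNReal.toReal_ofReal hdens, mul_assoc _ (sin θ ^ _),
    sin_rpow_mul_cos_rpow hs hc, abs_of_pos (by positivity), cos_two_mul_eq_one_sub]
  simp only [smul_eq_mul]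
  ring

lemma jacobiCoeff_mul_poch (α β : ℝ) {j n : ℕ} (hj : j ≤ n) (k : ℕ) :
    poch (α + j + 1) (n - j) / (n - j).factorial * (poch (β + (n - j) + 1) j / j.factorial) *
        (poch (α + 1) j * poch (β + 1) (n - j + k))
      = poch (α + 1) n * poch (β + 1) n / n.factorial *
          (n.choose j * poch (β + 1 + (n - j)) k) := by
  have hα : poch (α + 1) n = poch (α + 1) j * poch (α + j + 1) (n - j) := by
    rw [add_right_comm, ← poch_add, Nat.add_sub_cancel' hj]
  have hβ : poch (β + 1) n = poch (β + 1) (n - j) * poch (β + (n - j) + 1) j := by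
    rw [add_right_comm, ← Nat.cast_sub hj, ← poch_add, Nat.sub_add_cancel hj]
  have hchoose_ne : (n.choose j : ℝ) ≠ 0 := Nat.cast_ne_zero.mpr (Nat.choose_pos hj).ne'
  have hchoose : (n.choose j : ℝ) * j.factorial * (n - j).factorial = n.factorial := by
    exact_mod_cast Nat.choose_mul_factorial_mul_factorial hj
  rw [poch_add, hα, hβ, ← hchoose, Nat.cast_sub hj]
  field_simp

lemma betaWeight_mul_jacobiP (α β : ℝ) (k n : ℕ) (x : ℝ) :
    x ^ α * (1 - x) ^ β * ((1 + (1 - 2 * x)) ^ k * jacobiP α β n (1 - 2 * x))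
      = ∑ j ∈ range (n + 1), 2 ^ k * (-1) ^ j *
          (poch (α + j + 1) (n - j) / (n - j).factorial *
            (poch (β + (n - j) + 1) j / j.factorial)) *
          (x ^ α * (1 - x) ^ β * (x ^ j * (1 - x) ^ (n - j + k))) := by
  rw [jacobiP, mul_sum, mul_sum]
  refine sum_congr rfl fun j _ => ?_
  rw [show (1 - 2 * x - 1) / 2 = -x by ring, show (1 - 2 * x + 1) / 2 = 1 - x by ring,
    show 1 + (1 - 2 * x) = 2 * (1 - x) by ring, neg_pow, mul_pow, pow_add]
  ring

lemma integral_jacobiTerm {α β : ℝ} (hα : -1 < α) (hβ : -1 < β) (k : ℕ) {j n : ℕ}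
    (hj : j ≤ n) :
    ∫ x in Ioo (0 : ℝ) 1, 2 ^ k * (-1) ^ j *
        (poch (α + j + 1) (n - j) / (n - j).factorial *
          (poch (β + (n - j) + 1) j / j.factorial)) *
        (x ^ α * (1 - x) ^ β * (x ^ j * (1 - x) ^ (n - j + k)))
      = beta (α + 1) (β + 1) * (2 ^ k * poch (α + 1) n * poch (β + 1) n /
          (n.factorial * poch (α + β + 2) (n + k))) *
        ((-1) ^ j * n.choose j * poch (β + 1 + (n - j)) k) := by
  have hP : poch (α + β + 2) (n + k) ≠ 0 := (poch_pos (by linarith) _).ne'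
  rw [integral_const_mul, integral_betaWeight_mul_pow_mul_pow hα hβ,
    ← add_assoc, Nat.add_sub_cancel' hj]
  linear_combination (2 ^ k * (-1) ^ j * beta (α + 1) (β + 1) / poch (α + β + 2) (n + k)) *
    jacobiCoeff_mul_poch α β hj k

/-- Jacobi coefficients of the powers `(1 + cos 2θ)^k`. -/
theorem stmt8 (α β : ℝ) (hα : -1 < α) (hβ : -1 < β) (k n : ℕ) :
    ∫ θ, (1 + Real.cos (2 * θ)) ^ k * jacobiP α β n (Real.cos (2 * θ)) ∂(nuMeasure α β)
      = (k.choose n : ℝ) * 2 ^ k * poch (α + 1) n * poch (β + 1) k /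
          poch (α + β + 2) (n + k) := by
  have hB : beta (α + 1) (β + 1) ≠ 0 := (beta_pos (by linarith) (by linarith)).ne'
  have hP : poch (α + β + 2) (n + k) ≠ 0 := (poch_pos (by linarith) _).ne'
  rw [integral_nuMeasure_comp_cos_two_mul hα hβ fun t => (1 + t) ^ k * jacobiP α β n t,
    setIntegral_congr_fun measurableSet_Ioo fun x _ => betaWeight_mul_jacobiP α β k n x,
    integral_finsetSum _ fun j _ =>
      (integrableOn_betaWeight_mul_pow_mul_pow hα hβ j (n - j + k)).const_mul _,
    sum_congr rfl fun j hj =>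
      integral_jacobiTerm hα hβ k (Nat.lt_succ_iff.mp (mem_range.mp hj)),
    ← mul_sum, sum_alternating_choose_mul_poch]
  have := poch_mul_descFactorial (β + 1) k n
  field_simp
  linear_combination poch (α + 1) n * this
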